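/- Every Harnack function on a domain D ⊆ ℝ^N, N ≥ 2, is quasinearly subharmonic n.s.: if u : D → [0, +∞) is continuous and there exist λ ∈ (0,1) and C_λ ≥ 1 such that max_{z ∈ B̄(x, λr)} u(z) ≤ C_λ min_{z ∈ B̄(x, λr)} u(z) whenever B(x,r) ⊆ D, then there exists K ≥ 1 such that u(x) ≤ K/(ν_N r^N) ∫_{B(x,r)} u dm_N for all closed balls B̄(x,r) ⊂ D. -/

import Mathlib

open MeasureTheory Metric
open scoped ENNReal

noncomputable section

/-- `ℝ^N` as Euclidean space. -/
abbrev Euc (N : ℕ) := EuclideanSpace ℝ (Fin N)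

/-- `ν_N`: the volume of the unit ball in `ℝ^N`. -/
noncomputable def unitBallVol (N : ℕ) : ℝ := (volume (ball (0 : Euc N) 1)).toReal

/-- Positive part of an extended real, valued in `ℝ≥0∞`. -/
noncomputable def epos (x : EReal) : ℝ≥0∞ := if x = ⊤ then ⊤ else ENNReal.ofReal x.toReal

/-- The extended-real valued Lebesgue integral of `u` over `s`
(well defined whenever the positive part is integrable). -/
noncomputable def esetInt {N : ℕ} (u : Euc N → EReal) (s : Set (Euc N)) : EReal :=
  ((∫⁻ y in s, epos (u y)) : ℝ≥0∞) - ((∫⁻ y in s, epos (-(u y))) : ℝ≥0∞)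

/-- The generalized sub-mean-value inequality
`u(x) ≤ K/(ν_N r^N) ∫_{B(x,r)} u dm_N` over all closed balls contained in `D`. -/
def SubMeanIneq {N : ℕ} (K : ℝ) (D : Set (Euc N)) (u : Euc N → EReal) : Prop :=
  ∀ x r, 0 < r → closedBall x r ⊆ D →
    u x ≤ ((K / (unitBallVol N * r ^ N) : ℝ) : EReal) * esetInt u (ball x r)

/-- `u` is `K`-quasinearly subharmonic n.s. (in the narrow sense) on `D`:
`u` is measurable, `u⁺ ∈ L¹_loc(D)`, `u < +∞` and the sub-mean-value
inequality with constant `K` holds on all closed balls in `D`. -/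
def QNSns {N : ℕ} (K : ℝ) (D : Set (Euc N)) (u : Euc N → EReal) : Prop :=
  1 ≤ K ∧ AEMeasurable u (volume.restrict D) ∧ (∀ x ∈ D, u x < ⊤) ∧
  LocallyIntegrableOn (fun y => ((u y) ⊔ 0).toReal) D volume ∧
  SubMeanIneq K D u

/-- The family of inequalities (for every `M ≥ 0`, applied to `u_M = max (u, -M) + M`)
defining `K`-quasinearly subharmonic functions. -/
def QNSIneqFull {N : ℕ} (K : ℝ) (D : Set (Euc N)) (u : Euc N → EReal) : Prop :=
  ∀ M : ℝ, 0 ≤ M → ∀ x r, 0 < r → closedBall x r ⊆ D →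
    (u x ⊔ ((-M : ℝ) : EReal)) + (M : EReal) ≤
      ((K / (unitBallVol N * r ^ N) : ℝ) : EReal) *
        ((∫⁻ y in ball x r, epos ((u y ⊔ ((-M : ℝ) : EReal)) + (M : EReal))) : ℝ≥0∞)

/-- `u` is `K`-quasinearly subharmonic on `D`. -/
def QNSfull {N : ℕ} (K : ℝ) (D : Set (Euc N)) (u : Euc N → EReal) : Prop :=
  1 ≤ K ∧ AEMeasurable u (volume.restrict D) ∧ (∀ x ∈ D, u x < ⊤) ∧
  LocallyIntegrableOn (fun y => ((u y) ⊔ 0).toReal) D volume ∧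
  QNSIneqFull K D u

/-- `u ∈ L¹_loc(D)` for an extended-real valued `u`. -/
def LocIntE {N : ℕ} (u : Euc N → EReal) (D : Set (Euc N)) : Prop :=
  ∀ k, k ⊆ D → IsCompact k → (∫⁻ y in k, epos (u y) + epos (-(u y))) < ⊤

/-- The sub-mean-value inequality for real-valued functions. -/
def SubMeanIneqR {N : ℕ} (K : ℝ) (D : Set (Euc N)) (u : Euc N → ℝ) : Prop :=
  ∀ x r, 0 < r → closedBall x r ⊆ D →
    u x ≤ (K / (unitBallVol N * r ^ N)) * ∫ y in ball x r, u y

/-- The quasinearly subharmonicity inequalities (for every `M ≥ 0`,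
applied to `u_M = max (u, -M) + M`) for real-valued functions. -/
def QNSIneqFullR {N : ℕ} (K : ℝ) (D : Set (Euc N)) (u : Euc N → ℝ) : Prop :=
  ∀ M : ℝ, 0 ≤ M → ∀ x r, 0 < r → closedBall x r ⊆ D →
    max (u x) (-M) + M ≤
      (K / (unitBallVol N * r ^ N)) * ∫ y in ball x r, (max (u y) (-M) + M)

/-- `u : D → [-∞, +∞)` is harmonic on `D`: it is finite (real-valued) on `D`,
continuous on `D`, and satisfies the mean value equality on all closed balls in `D`. -/
def IsHarmonicOn {N : ℕ} (D : Set (Euc N)) (u : Euc N → EReal) : Prop :=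
  (∀ x ∈ D, u x ≠ ⊥ ∧ u x ≠ ⊤) ∧ ContinuousOn (fun x => (u x).toReal) D ∧
  ∀ x r, 0 < r → closedBall x r ⊆ D →
    (u x).toReal = (1 / (unitBallVol N * r ^ N)) * ∫ y in ball x r, (u y).toReal

end

/-
Applied at the centre `x` of a ball `B(x, r) ⊆ D`, the Harnack inequality gives `u ≥ u(x) / C`
on the concentric ball of radius `λ r`. Since `u ≥ 0`, integrating over that smaller ball yields
`∫_{B(x,r)} u ≥ (u(x) / C) ν_N (λ r)^N`, i.e. the sub-mean-value inequality with `K = C / λ^N`.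
-/

lemma unitBallVol_pos (N : ℕ) : 0 < unitBallVol N :=
  ENNReal.toReal_pos (measure_ball_pos _ _ one_pos).ne' measure_ball_lt_top.ne

lemma measureReal_ball_euc {N : ℕ} (x : Euc N) {r : ℝ} (hr : 0 < r) :
    volume.real (ball x r) = unitBallVol N * r ^ N := by
  rw [measureReal_def, Measure.addHaar_ball_of_pos _ _ hr, ENNReal.toReal_mul,
    ENNReal.toReal_ofReal (by positivity), finrank_euclideanSpace_fin, unitBallVol, mul_comm]

lemma mul_measureReal_ball_le_setIntegral {X : Type*} [PseudoMetricSpace X] [ProperSpace X]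
    [MeasurableSpace X] [OpensMeasurableSpace X] {μ : Measure X} [IsFiniteMeasureOnCompacts μ]
    {u : X → ℝ} {x : X} {ρ r c : ℝ} (hρr : ρ ≤ r) (hint : IntegrableOn u (ball x r) μ)
    (hnonneg : ∀ y ∈ ball x r, 0 ≤ u y) (hc : ∀ y ∈ ball x ρ, c ≤ u y) :
    c * μ.real (ball x ρ) ≤ ∫ y in ball x r, u y ∂μ :=
  calc c * μ.real (ball x ρ) ≤ ∫ y in ball x ρ, u y ∂μ :=
        setIntegral_ge_of_const_le_real measurableSet_ball measure_ball_lt_top.ne hc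
          (hint.mono_set (ball_subset_ball hρr))
    _ ≤ ∫ y in ball x r, u y ∂μ :=
        setIntegral_mono_set hint ((ae_restrict_iff' measurableSet_ball).2 (ae_of_all _ hnonneg))
          (ball_subset_ball hρr).eventuallyLE

theorem harnackFunction_isQnsns_general {N : ℕ}
    (D : Set (Euc N))
    (u : Euc N → ℝ) (hcont : ContinuousOn u D) (hpos : ∀ x ∈ D, 0 ≤ u x)
    (l C : ℝ) (hl0 : 0 < l) (hl1 : l < 1) (hC : 1 ≤ C)
    (harnack : ∀ x r, 0 < r → ball x r ⊆ D →
      ∀ z ∈ closedBall x (l * r), ∀ w ∈ closedBall x (l * r), u z ≤ C * u w) :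
    ∃ K : ℝ, 1 ≤ K ∧ SubMeanIneqR K D u := by
  have hC0 : 0 < C := one_pos.trans_le hC
  have hlN : 0 < l ^ N := pow_pos hl0 N
  refine ⟨C / l ^ N, (one_le_div hlN).2 (pow_le_one₀ hl0.le hl1.le |>.trans hC), ?_⟩
  intro x r hr hsub
  have hball : ball x r ⊆ D := ball_subset_closedBall.trans hsub
  have hint : IntegrableOn u (ball x r) :=
    ((hcont.mono hsub).integrableOn_compact (isCompact_closedBall x r)).mono_set
      ball_subset_closedBall
  have hlower : ∀ y ∈ ball x (l * r), u x / C ≤ u y := fun y hy =>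
    (div_le_iff₀' hC0).2 <| harnack x r hr hball x (mem_closedBall_self (by positivity)) y
      (ball_subset_closedBall hy)
  have hmean : u x / C * (unitBallVol N * (l * r) ^ N) ≤ ∫ y in ball x r, u y := by
    rw [← measureReal_ball_euc x (by positivity)]
    exact mul_measureReal_ball_le_setIntegral (mul_le_of_le_one_left hr.le hl1.le) hint
      (fun y hy => hpos y (hball hy)) hlower
  have hν := unitBallVol_pos N
  calc u x = C / l ^ N / (unitBallVol N * r ^ N) *
        (u x / C * (unitBallVol N * (l * r) ^ N)) := by field_simp; ring
    _ ≤ C / l ^ N / (unitBallVol N * r ^ N) * ∫ y in ball x r, u y := by gcongr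

/-- every Harnack function is quasinearly subharmonic n.s. -/
theorem harnackFunction_isQnsns {N : ℕ} (hN : 2 ≤ N)
    (D : Set (Euc N)) (hDopen : IsOpen D) (hDconn : IsConnected D)
    (u : Euc N → ℝ) (hcont : ContinuousOn u D) (hpos : ∀ x ∈ D, 0 ≤ u x)
    (l C : ℝ) (hl0 : 0 < l) (hl1 : l < 1) (hC : 1 ≤ C)
    (harnack : ∀ x r, 0 < r → ball x r ⊆ D →
      ∀ z ∈ closedBall x (l * r), ∀ w ∈ closedBall x (l * r), u z ≤ C * u w) :
    ∃ K : ℝ, 1 ≤ K ∧ SubMeanIneqR K D u :=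
  harnackFunction_isQnsns_general D u hcont hpos l C hl0 hl1 hC harnack
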